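/- arXiv:1908.04242 — 4 statements merged into one kernel-verified Lean document; each statement's English description precedes it below -/
import Mathlib

section
/- If additionally an interpolation operator I_h satisfies I_h (R_h v_h) = v_h for all v_h in the finite element space, then ‖u − u_h‖ ≤ (1/(1−β))·‖R_h u_h − I_h(R_h u_h)‖. -/
theorem stmt_1 {V : Type*} [NormedAddCommGroup V] [Module ℝ V] (Vh : Submodule ℝ V)
    (u : V) (uh : V) (huh : uh ∈ Vh) (Rh : V → V) (Ih : V → V) (β : ℝ)
    (hβ0 : 0 ≤ β) (hβ1 : β < 1) (h : ‖Rh uh - u‖ ≤ β * ‖uh - u‖)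
    (hIh : ∀ vh ∈ Vh, Ih (Rh vh) = vh) :
    ‖u - uh‖ ≤ (1 / (1 - β)) * ‖Rh uh - Ih (Rh uh)‖ := by
  rw [hIh uh huh]
  have h1 : ‖u - uh‖ ≤ ‖Rh uh - u‖ + ‖Rh uh - uh‖ := by
    have := norm_sub_le_norm_sub_add_norm_sub u (Rh uh) uh
    have e : ‖u - Rh uh‖ = ‖Rh uh - u‖ := norm_sub_rev _ _
    linarith
  have h2 : ‖uh - u‖ = ‖u - uh‖ := norm_sub_rev _ _
  have hb : 0 < 1 - β := by linarith
  rw [div_mul_eq_mul_div, le_div_iff₀ hb]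
  nlinarith [norm_nonneg (Rh uh - uh)]
end

section
/- Let α_h > 0 satisfy Σ_K |K| (det(I + (1/α_h)|H_K|))^{q/(d+2q)} = 2^{max{1, dq/(d+2q)}}·|Ω|. Then α_h ≥ [ (2^{max{2, dq/(d+2q)+1} − q/(d+2q)} − 1)^{−1} (1/|Ω|) Σ_K |K| (det|H_K|)^{q/(d+2q)} ]^{(d+2q)/(dq)}. -/
open Finset

/-- For a nonempty finite product of nonnegative reals, `1 + ∏ x ≤ ∏ (1 + x)`. -/
lemma aux_one_add_prod_le {ι : Type*} (s : Finset ι) (hs : s.Nonempty) (x : ι → ℝ)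
    (hx : ∀ i ∈ s, 0 ≤ x i) : 1 + ∏ i ∈ s, x i ≤ ∏ i ∈ s, (1 + x i) := by
  induction hs using Finset.Nonempty.cons_induction with
  | singleton a => simp
  | cons a s ha hs ih =>
    rw [Finset.prod_cons, Finset.prod_cons]
    have hxa : 0 ≤ x a := hx a (Finset.mem_cons_self a s)
    have hprod : 0 ≤ ∏ i ∈ s, x i :=
      Finset.prod_nonneg fun i hi => hx i (Finset.mem_cons_of_mem hi)
    have ih' := ih fun i hi => hx i (Finset.mem_cons_of_mem hi)
    calc 1 + x a * ∏ i ∈ s, x i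
        ≤ (1 + x a) * (1 + ∏ i ∈ s, x i) := by nlinarith
      _ ≤ (1 + x a) * ∏ i ∈ s, (1 + x i) := by nlinarith

/-- det(1 + c • H) ≥ 1 + c^d det H for PSD H, c ≥ 0, d ≥ 1. -/
lemma aux_det_one_add_smul {d : ℕ} (hd : 1 ≤ d) (H : Matrix (Fin d) (Fin d) ℝ)
    (hH : H.PosSemidef) (c : ℝ) (hc : 0 ≤ c) :
    1 + c ^ d * H.det ≤ (1 + c • H).det := by
  have hHerm := hH.1
  set U : Matrix (Fin d) (Fin d) ℝ := (hHerm.eigenvectorUnitary : Matrix (Fin d) (Fin d) ℝ)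
  have hU : U * star U = 1 := Matrix.mem_unitaryGroup_iff.mp hHerm.eigenvectorUnitary.2
  have hspec : H = U * Matrix.diagonal (RCLike.ofReal ∘ hHerm.eigenvalues) * star U :=
    hHerm.spectral_theorem
  have hofReal : (RCLike.ofReal ∘ hHerm.eigenvalues : Fin d → ℝ) = hHerm.eigenvalues := by
    ext i; simp [RCLike.ofReal_real_eq_id]
  rw [hofReal] at hspec
  have key : 1 + c • H = U * Matrix.diagonal (fun i => 1 + c * hHerm.eigenvalues i) * star U := by
    have : (Matrix.diagonal (fun i => 1 + c * hHerm.eigenvalues i) : Matrix (Fin d) (Fin d) ℝ)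
        = 1 + c • Matrix.diagonal hHerm.eigenvalues := by
      ext i j
      by_cases h : i = j <;>
        simp [Matrix.diagonal_apply, Matrix.one_apply, h]
    rw [this, Matrix.mul_add, Matrix.add_mul, Matrix.mul_one, hU]
    rw [Matrix.mul_smul, Matrix.smul_mul, ← hspec]
  have hdetU : U.det * (star U).det = 1 := by
    rw [← Matrix.det_mul, hU, Matrix.det_one]
  have hdet : (1 + c • H).det = ∏ i, (1 + c * hHerm.eigenvalues i) := by
    rw [key, Matrix.det_mul, Matrix.det_mul, Matrix.det_diagonal]
    linear_combination (∏ i, (1 + c * hHerm.eigenvalues i)) * hdetU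
  rw [hdet]
  have hdetH : H.det = ∏ i, hHerm.eigenvalues i := by
    have := hHerm.det_eq_prod_eigenvalues
    simpa [RCLike.ofReal_real_eq_id] using this
  have hnonneg : ∀ i ∈ (Finset.univ : Finset (Fin d)), 0 ≤ c * hHerm.eigenvalues i :=
    fun i _ => mul_nonneg hc (hH.eigenvalues_nonneg i)
  have hne : (Finset.univ : Finset (Fin d)).Nonempty := by
    rw [Finset.univ_nonempty_iff]
    exact Fin.pos_iff_nonempty.mp hd
  have := aux_one_add_prod_le Finset.univ hne (fun i => c * hHerm.eigenvalues i) hnonneg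
  calc 1 + c ^ d * H.det = 1 + ∏ i, (c * hHerm.eigenvalues i) := by
        rw [hdetH, Finset.prod_mul_distrib, Finset.prod_const, Finset.card_univ,
          Fintype.card_fin]
    _ ≤ ∏ i, (1 + c * hHerm.eigenvalues i) := this

/-- `2^(p-1) * (1 + s^p) ≤ (1 + s)^p` for `0 < p ≤ 1`, `s ≥ 0`. -/
lemma aux_concave {p : ℝ} (hp0 : 0 < p) (hp1 : p ≤ 1) {s : ℝ} (hs : 0 ≤ s) :
    (2 : ℝ) ^ (p - 1) * (1 + s ^ p) ≤ (1 + s) ^ p := by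
  rcases eq_or_lt_of_le hp1 with rfl | hp1
  · simp [Real.rpow_zero]
  have hcon := (Real.strictConcaveOn_rpow hp0 hp1).concaveOn
  have h := hcon.2 (Set.mem_Ici.mpr (zero_le_one)) (Set.mem_Ici.mpr hs)
    (by norm_num : (0:ℝ) ≤ 1/2) (by norm_num : (0:ℝ) ≤ 1/2) (by norm_num)
  simp only [smul_eq_mul, Real.one_rpow] at h
  -- h : 1/2 * 1 + 1/2 * s^p ≤ (1/2 * 1 + 1/2 * s) ^ p
  have hhalf : (1/2 * 1 + 1/2 * s : ℝ) = (1 + s) / 2 := by ring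
  rw [hhalf] at h
  have hdiv : ((1 + s) / 2 : ℝ) ^ p = (1 + s) ^ p / 2 ^ p := by
    rw [Real.div_rpow (by linarith) (by norm_num)]
  rw [hdiv] at h
  have h2p : (0:ℝ) < 2 ^ p := Real.rpow_pos_of_pos (by norm_num) p
  have h21 : (2:ℝ) ^ (p - 1) = 2 ^ p / 2 := by
    rw [Real.rpow_sub (by norm_num), Real.rpow_one]
  rw [h21]
  calc (2:ℝ) ^ p / 2 * (1 + s ^ p) = 2 ^ p * (1/2 * 1 + 1/2 * s ^ p) := by ring
    _ ≤ 2 ^ p * ((1 + s) ^ p / 2 ^ p) := by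
        exact mul_le_mul_of_nonneg_left h h2p.le
    _ = (1 + s) ^ p := by field_simp

theorem stmt_12 {ι : Type*} (Th : Finset ι) {d : ℕ} (hd : 1 ≤ d) (q : ℝ) (hq : 1 ≤ q)
    (vol : ι → ℝ) (hvol : ∀ K ∈ Th, 0 < vol K)
    (H : ι → Matrix (Fin d) (Fin d) ℝ) (hH : ∀ K ∈ Th, (H K).PosSemidef)
    (αh : ℝ) (hαh : 0 < αh)
    (heq : ∑ K ∈ Th, vol K * ((1 + αh⁻¹ • H K).det) ^ (q / ((d : ℝ) + 2 * q))
      = (2 : ℝ) ^ (max 1 ((d : ℝ) * q / ((d : ℝ) + 2 * q))) * (∑ K ∈ Th, vol K)) :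
    αh ≥ (((2 : ℝ) ^ (max 2 ((d : ℝ) * q / ((d : ℝ) + 2 * q) + 1)
              - q / ((d : ℝ) + 2 * q)) - 1)⁻¹ *
          ((1 / (∑ K ∈ Th, vol K)) *
            ∑ K ∈ Th, vol K * ((H K).det) ^ (q / ((d : ℝ) + 2 * q))))
        ^ (((d : ℝ) + 2 * q) / ((d : ℝ) * q)) := by
  have hd0 : (0:ℝ) < d := by exact_mod_cast hd
  have hq0 : (0:ℝ) < q := lt_of_lt_of_le one_pos hq
  have hden : (0:ℝ) < (d:ℝ) + 2 * q := by linarith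
  set p : ℝ := q / ((d : ℝ) + 2 * q) with hp_def
  have hp0 : 0 < p := div_pos hq0 hden
  have hp1 : p ≤ 1 := by
    rw [hp_def, div_le_one hden]; linarith
  have hdp : (d : ℝ) * q / ((d : ℝ) + 2 * q) = (d : ℝ) * p := by
    rw [hp_def]; ring
  have hdp0 : 0 < (d:ℝ) * p := mul_pos hd0 hp0
  have he : ((d : ℝ) + 2 * q) / ((d : ℝ) * q) = ((d : ℝ) * p)⁻¹ := by
    rw [hp_def]; field_simp
  rcases Th.eq_empty_or_nonempty with rfl | hne
  · simp only [Finset.sum_empty, mul_zero]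
    rw [ge_iff_le, Real.zero_rpow]
    · exact hαh.le
    · rw [he]; exact inv_ne_zero hdp0.ne'
  -- Nonempty case
  have hV : 0 < ∑ K ∈ Th, vol K := Finset.sum_pos hvol hne
  set V := ∑ K ∈ Th, vol K with hV_def
  set T := ∑ K ∈ Th, vol K * ((H K).det) ^ p with hT_def
  have hT0 : 0 ≤ T :=
    Finset.sum_nonneg fun K hK => mul_nonneg (hvol K hK).le (Real.rpow_nonneg
      (by
        have := (hH K hK).1.det_eq_prod_eigenvalues
        have h2 : (H K).det = ∏ i, (hH K hK).1.eigenvalues i := by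
          simpa [RCLike.ofReal_real_eq_id] using this
        rw [h2]
        exact Finset.prod_nonneg fun i _ => (hH K hK).eigenvalues_nonneg i) p)
  set c : ℝ := (αh⁻¹) ^ ((d:ℝ) * p) with hc_def
  have hc0 : 0 < c := Real.rpow_pos_of_pos (inv_pos.mpr hαh) _
  -- pointwise bound
  have hpoint : ∀ K ∈ Th,
      2 ^ (p - 1) * (vol K * (1 + c * ((H K).det) ^ p)) ≤
        vol K * ((1 + αh⁻¹ • H K).det) ^ p := by
    intro K hK
    have hdetH0 : 0 ≤ (H K).det := by
      have := (hH K hK).1.det_eq_prod_eigenvalues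
      have h2 : (H K).det = ∏ i, (hH K hK).1.eigenvalues i := by
        simpa [RCLike.ofReal_real_eq_id] using this
      rw [h2]
      exact Finset.prod_nonneg fun i _ => (hH K hK).eigenvalues_nonneg i
    have hs : 0 ≤ (αh⁻¹) ^ d * (H K).det :=
      mul_nonneg (pow_nonneg (inv_pos.mpr hαh).le d) hdetH0
    have h1 : 1 + (αh⁻¹) ^ d * (H K).det ≤ (1 + αh⁻¹ • H K).det :=
      aux_det_one_add_smul hd (H K) (hH K hK) αh⁻¹ (inv_pos.mpr hαh).le
    have h2 : (1 + (αh⁻¹) ^ d * (H K).det) ^ p ≤ ((1 + αh⁻¹ • H K).det) ^ p :=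
      Real.rpow_le_rpow (by linarith) h1 hp0.le
    have h3 : (2:ℝ) ^ (p - 1) * (1 + ((αh⁻¹) ^ d * (H K).det) ^ p) ≤
        (1 + (αh⁻¹) ^ d * (H K).det) ^ p := aux_concave hp0 hp1 hs
    have h4 : ((αh⁻¹) ^ d * (H K).det) ^ p = c * ((H K).det) ^ p := by
      rw [Real.mul_rpow (pow_nonneg (inv_pos.mpr hαh).le d) hdetH0, hc_def]
      congr 1
      rw [← Real.rpow_natCast αh⁻¹ d, ← Real.rpow_mul (inv_pos.mpr hαh).le]
    rw [h4] at h3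
    calc 2 ^ (p - 1) * (vol K * (1 + c * ((H K).det) ^ p))
        = vol K * (2 ^ (p - 1) * (1 + c * ((H K).det) ^ p)) := by ring
      _ ≤ vol K * (1 + (αh⁻¹) ^ d * (H K).det) ^ p :=
          mul_le_mul_of_nonneg_left h3 (hvol K hK).le
      _ ≤ vol K * ((1 + αh⁻¹ • H K).det) ^ p :=
          mul_le_mul_of_nonneg_left h2 (hvol K hK).le
  -- sum the pointwise bound
  have hsum : 2 ^ (p - 1) * (V + c * T) ≤ 2 ^ (max 1 ((d : ℝ) * p)) * V := by
    rw [hdp] at heq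
    calc (2:ℝ) ^ (p - 1) * (V + c * T)
        = ∑ K ∈ Th, 2 ^ (p - 1) * (vol K * (1 + c * ((H K).det) ^ p)) := by
          rw [hV_def, hT_def, Finset.mul_sum, ← Finset.sum_add_distrib, Finset.mul_sum]
          congr 1; ext K; ring
      _ ≤ ∑ K ∈ Th, vol K * ((1 + αh⁻¹ • H K).det) ^ p :=
          Finset.sum_le_sum hpoint
      _ = 2 ^ (max 1 ((d : ℝ) * p)) * V := heq
  -- rearrange
  have h2p1 : (0:ℝ) < 2 ^ (p - 1) := Real.rpow_pos_of_pos (by norm_num) _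
  set M' : ℝ := max 2 ((d : ℝ) * q / ((d : ℝ) + 2 * q) + 1) - p with hM'_def
  have hmax : max 2 ((d:ℝ)*p + 1) = max 1 ((d:ℝ)*p) + 1 := by
    rcases le_total ((d:ℝ)*p) 1 with h | h
    · rw [max_eq_left (by linarith), max_eq_left h]; norm_num
    · rw [max_eq_right (by linarith), max_eq_right h]
  have hM'eq : (2:ℝ) ^ M' = 2 ^ (max 1 ((d : ℝ) * p)) / 2 ^ (p - 1) := by
    rw [hM'_def, hdp, hmax, ← Real.rpow_sub (by norm_num)]
    congr 1; ring
  have hM'pos : 1 < (2:ℝ) ^ M' := by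
    have hM'1 : 1 ≤ M' := by
      rw [hM'_def]
      have : (2:ℝ) ≤ max 2 ((d : ℝ) * q / ((d : ℝ) + 2 * q) + 1) := le_max_left _ _
      linarith
    calc (1:ℝ) = 2 ^ (0:ℝ) := by rw [Real.rpow_zero]
      _ < 2 ^ M' := Real.rpow_lt_rpow_left_iff (by norm_num) |>.mpr (by linarith)
  have hkey : c * T ≤ (2 ^ M' - 1) * V := by
    have : 2 ^ (p-1) * (c * T) ≤ 2 ^ (max 1 ((d : ℝ) * p)) * V - 2 ^ (p-1) * V := by
      linarith [hsum]
    have h5 : (2:ℝ) ^ (max 1 ((d : ℝ) * p)) = 2 ^ M' * 2 ^ (p-1) := by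
      rw [hM'eq]; field_simp
    rw [h5] at this
    nlinarith
  -- conclude
  set R : ℝ := (( 2 : ℝ) ^ M' - 1)⁻¹ * ((1 / V) * T) with hR_def
  have hR0 : 0 ≤ R :=
    mul_nonneg (inv_nonneg.mpr (by linarith)) (mul_nonneg (by positivity) hT0)
  have hA : R ≤ αh ^ ((d:ℝ) * p) := by
    have hcinv : c = (αh ^ ((d:ℝ) * p))⁻¹ := by
      rw [hc_def, Real.inv_rpow hαh.le]
    have hApos : 0 < αh ^ ((d:ℝ) * p) := Real.rpow_pos_of_pos hαh _
    rw [hR_def]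
    rw [hcinv] at hkey
    have h6 : T ≤ (2 ^ M' - 1) * V * αh ^ ((d:ℝ) * p) := by
      have := mul_le_mul_of_nonneg_left hkey hApos.le
      calc T = αh ^ ((d:ℝ) * p) * ((αh ^ ((d:ℝ) * p))⁻¹ * T) := by
            field_simp
        _ ≤ αh ^ ((d:ℝ) * p) * ((2 ^ M' - 1) * V) := this
        _ = (2 ^ M' - 1) * V * αh ^ ((d:ℝ) * p) := by ring
    rw [mul_comm ((2:ℝ) ^ M' - 1)⁻¹ _, ← div_eq_mul_inv, div_le_iff₀ (by linarith)]
    calc 1 / V * T ≤ 1 / V * ((2 ^ M' - 1) * V * αh ^ ((d:ℝ) * p)) :=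
          mul_le_mul_of_nonneg_left h6 (by positivity)
      _ = αh ^ ((d:ℝ) * p) * (2 ^ M' - 1) := by field_simp
  calc (R : ℝ) ^ (((d : ℝ) + 2 * q) / ((d : ℝ) * q))
      = R ^ (((d:ℝ) * p)⁻¹) := by rw [he]
    _ ≤ (αh ^ ((d:ℝ) * p)) ^ (((d:ℝ) * p)⁻¹) :=
        Real.rpow_le_rpow hR0 hA (by positivity)
    _ = αh := by
        rw [← Real.rpow_mul hαh.le, mul_inv_cancel₀ hdp0.ne', Real.rpow_one]
end

section
/- Suppose a mesh satisfies the alignment condition (1/d)tr((F_K')ᵀ M_K F_K') = (det((F_K')ᵀ M_K F_K'))^{1/d} and the equidistribution condition |K|√(det M_K) = σ_h/N for all K, where M_K = (det(I + (1/α)|H_K|))^{−1/(d+2q)}(I + (1/α)|H_K|). Then Σ_K |K| ((1/d)tr((F_K')ᵀ(I + (1/α)|H_K|)F_K'))^q = N^{−2q/d} σ_h^{(d+2q)/d}. -/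
open Matrix

lemma key16 {d : ℕ} (hd : 1 ≤ d) (q α : ℝ) (hq : 1 ≤ q) (hα : 0 < α)
    (Fm Hm Mm : Matrix (Fin d) (Fin d) ℝ) (hF : 0 < Fm.det) (hH : Hm.PosSemidef)
    (hM : Mm = (((1 + α⁻¹ • Hm).det) ^ (-(1:ℝ)/((d:ℝ)+2*q))) • (1 + α⁻¹ • Hm))
    (halign : (1/(d:ℝ)) * (Fmᵀ * Mm * Fm).trace = (Fmᵀ * Mm * Fm).det ^ ((1:ℝ)/d)) :
    Fm.det * ((1/(d:ℝ)) * (Fmᵀ * (1 + α⁻¹ • Hm) * Fm).trace) ^ q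
      = (Fm.det * Real.sqrt Mm.det) ^ (((d:ℝ)+2*q)/d) := by
  have hD : (0:ℝ) < (d:ℝ) := by exact_mod_cast hd
  have hD2q : (0:ℝ) < (d:ℝ) + 2*q := by linarith
  set A : Matrix (Fin d) (Fin d) ℝ := 1 + α⁻¹ • Hm with hAdef
  have hHs : (α⁻¹ • Hm).PosSemidef := hH.smul (inv_pos.mpr hα).le
  have hApos : A.PosDef := Matrix.PosDef.add_posSemidef Matrix.PosDef.one hHs
  have ha : 0 < A.det := hApos.det_pos
  set a := A.det with hadef
  set f := Fm.det with hfdef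
  set c : ℝ := a ^ (-(1:ℝ)/((d:ℝ)+2*q)) with hcdef
  have hc : 0 < c := Real.rpow_pos_of_pos ha _
  have hdetM : Mm.det = c^d * a := by
    rw [hM, Matrix.det_smul]; simp [Fintype.card_fin]; exact Or.inl hadef.symm
  have htr : (Fmᵀ * Mm * Fm).trace = c * (Fmᵀ * A * Fm).trace := by
    rw [hM, Matrix.mul_smul, Matrix.smul_mul, Matrix.trace_smul, smul_eq_mul]
  have hdetFMF : (Fmᵀ * Mm * Fm).det = f^2 * (c^d*a) := by
    rw [Matrix.det_mul, Matrix.det_mul, Matrix.det_transpose, hdetM]; ring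
  set t := (1/(d:ℝ)) * (Fmᵀ * A * Fm).trace with htdef
  have e1 : c * t = (f^2 * (c^d*a)) ^ ((1:ℝ)/d) := by
    rw [htdef, ← hdetFMF, ← halign, htr]; ring
  have hbase : (0:ℝ) < f^2*(c^d*a) := by positivity
  have hct : 0 < c * t := e1 ▸ Real.rpow_pos_of_pos hbase _
  have ht : 0 < t := by nlinarith
  clear_value t a f c
  have hw : 0 < Real.sqrt Mm.det := by
    rw [hdetM]; exact Real.sqrt_pos.mpr (by positivity)
  have lc : Real.log c = (-(1:ℝ)/((d:ℝ)+2*q)) * Real.log a := by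
    rw [hcdef]; exact Real.log_rpow ha _
  have lt' : Real.log t = (2/(d:ℝ)) * Real.log f + (1/(d:ℝ)) * Real.log a := by
    have h2 : Real.log (c*t) = ((1:ℝ)/d) * Real.log (f^2*(c^d*a)) := by
      rw [e1, Real.log_rpow hbase]
    rw [Real.log_mul hc.ne' ht.ne',
      Real.log_mul (by positivity : (f^2:ℝ) ≠ 0) (by positivity : (c^d*a:ℝ) ≠ 0),
      Real.log_mul (by positivity : (c^d:ℝ) ≠ 0) ha.ne',
      Real.log_pow, Real.log_pow] at h2
    push_cast at h2
    have h3 : Real.log t = (1:ℝ)/(d:ℝ) * (2*Real.log f + ((d:ℝ)*Real.log c + Real.log a))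
        - Real.log c := by linarith
    rw [h3, lc]
    field_simp
    ring
  have hLHS : 0 < f * t ^ q := by positivity
  have hRHS : 0 < (f * Real.sqrt Mm.det) ^ (((d:ℝ)+2*q)/d) :=
    Real.rpow_pos_of_pos (by positivity) _
  rw [← Real.exp_log hLHS, ← Real.exp_log hRHS]
  congr 1
  rw [Real.log_mul hF.ne' (by positivity), Real.log_rpow ht,
    Real.log_rpow (by positivity), Real.log_mul hF.ne' hw.ne', hdetM,
    Real.log_sqrt (by positivity), Real.log_mul (by positivity : (c^d:ℝ) ≠ 0) ha.ne',
    Real.log_pow, lt', lc]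
  field_simp
  ring

theorem stmt_16 {ι : Type*} (Th : Finset ι) {d : ℕ} (hd : 1 ≤ d)
    (q α : ℝ) (hq : 1 ≤ q) (hα : 0 < α)
    (F H : ι → Matrix (Fin d) (Fin d) ℝ)
    (hF : ∀ K ∈ Th, 0 < (F K).det)
    (hH : ∀ K ∈ Th, (H K).PosSemidef)
    (M : ι → Matrix (Fin d) (Fin d) ℝ)
    (hM : ∀ K ∈ Th, M K
      = (((1 + α⁻¹ • H K).det) ^ (-(1 : ℝ) / ((d : ℝ) + 2 * q))) • (1 + α⁻¹ • H K))
    (σh : ℝ) (hσ : σh = ∑ K ∈ Th, (F K).det * Real.sqrt (M K).det)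
    (halign : ∀ K ∈ Th, (1 / (d : ℝ)) * ((F K)ᵀ * M K * F K).trace
      = ((F K)ᵀ * M K * F K).det ^ ((1 : ℝ) / d))
    (hequi : ∀ K ∈ Th, (F K).det * Real.sqrt (M K).det = σh / Th.card) :
    ∑ K ∈ Th, (F K).det *
        ((1 / (d : ℝ)) * ((F K)ᵀ * (1 + α⁻¹ • H K) * F K).trace) ^ q
      = (Th.card : ℝ) ^ (-(2 * q) / (d : ℝ)) * σh ^ (((d : ℝ) + 2 * q) / d) := by
  have hD : (0:ℝ) < (d:ℝ) := by exact_mod_cast hd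
  have hD2q : (0:ℝ) < (d:ℝ) + 2*q := by linarith
  have hp : (0:ℝ) < ((d:ℝ)+2*q)/d := div_pos hD2q hD
  have hep : (-(2*q))/(d:ℝ) ≠ 0 := by
    apply div_ne_zero <;> [skip; exact hD.ne'] ; linarith
  have hsum : ∀ K ∈ Th, (F K).det *
      ((1/(d:ℝ)) * ((F K)ᵀ * (1 + α⁻¹ • H K) * F K).trace) ^ q
      = (σh / Th.card) ^ (((d:ℝ)+2*q)/d) := by
    intro K hK
    rw [key16 hd q α hq hα (F K) (H K) (M K) (hF K hK) (hH K hK) (hM K hK) (halign K hK),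
      hequi K hK]
  rw [Finset.sum_congr rfl hsum, Finset.sum_const, nsmul_eq_mul]
  rcases Th.eq_empty_or_nonempty with h | h
  · subst h
    simp only [Finset.sum_empty] at hσ
    simp [hσ, Real.zero_rpow hep, Real.zero_rpow hp.ne']
  · have hN : (0:ℝ) < Th.card := by exact_mod_cast Finset.card_pos.mpr h
    set c0 := σh / (Th.card : ℝ) with hc0
    have hσeq : σh = Th.card * c0 := by rw [hc0]; field_simp
    obtain ⟨K, hK⟩ := h
    have hc0nn : 0 ≤ c0 := by
      rw [← hequi K hK]
      exact mul_nonneg (hF K hK).le (Real.sqrt_nonneg _)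
    rcases hc0nn.eq_or_lt with hz | hpos
    · rw [hσeq, ← hz, mul_zero, Real.zero_rpow hp.ne', mul_zero, mul_zero]
    · rw [hσeq, Real.mul_rpow hN.le hpos.le, ← mul_assoc, ← Real.rpow_add hN]
      have : (-(2*q))/(d:ℝ) + ((d:ℝ)+2*q)/d = 1 := by field_simp; ring
      rw [this, Real.rpow_one]
end

section
/- Under the alignment and equidistribution conditions for the metric M_K = (det(I + (1/α_h)|H_K|))^{−1/(d+2q)}(I + (1/α_h)|H_K|) with α_h chosen so that σ_h = 2^{max{1,dq/(d+2q)}}|Ω|, the regularized error bound satisfies α_h^q Σ_K |K| ((1/d)tr((F_K')ᵀ(I + (1/α_h)|H_K|)F_K'))^q ≤ (2^{max{1,dq/(d+2q)}}|Ω|)^{(d+2q)/d} · α_h^q · N^{−2q/d}. -/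
open Matrix

lemma psd_smul' {d : ℕ} {c : ℝ} (hc : 0 ≤ c) {A : Matrix (Fin d) (Fin d) ℝ}
    (hA : A.PosSemidef) : (c • A).PosSemidef := by
  refine ⟨?_, fun x => ?_⟩
  · unfold Matrix.IsHermitian
    rw [conjTranspose_smul, hA.1.eq]
    simp
  · exact (hA.smul hc).2 x

theorem stmt_19 {ι : Type*} (Th : Finset ι) {d : ℕ} (hd : 1 ≤ d)
    (q αh : ℝ) (hq : 1 ≤ q) (hαh : 0 < αh)
    (F H : ι → Matrix (Fin d) (Fin d) ℝ)
    (hF : ∀ K ∈ Th, 0 < (F K).det)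
    (hH : ∀ K ∈ Th, (H K).PosSemidef)
    (M : ι → Matrix (Fin d) (Fin d) ℝ)
    (hM : ∀ K ∈ Th, M K
      = (((1 + αh⁻¹ • H K).det) ^ (-(1 : ℝ) / ((d : ℝ) + 2 * q))) • (1 + αh⁻¹ • H K))
    (σh : ℝ) (hσ : σh = ∑ K ∈ Th, (F K).det * Real.sqrt (M K).det)
    (hσval : σh = (2 : ℝ) ^ (max 1 ((d : ℝ) * q / ((d : ℝ) + 2 * q)))
      * (∑ K ∈ Th, (F K).det))
    (halign : ∀ K ∈ Th, (1 / (d : ℝ)) * ((F K)ᵀ * M K * F K).trace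
      = ((F K)ᵀ * M K * F K).det ^ ((1 : ℝ) / d))
    (hequi : ∀ K ∈ Th, (F K).det * Real.sqrt (M K).det = σh / Th.card) :
    αh ^ q * ∑ K ∈ Th, (F K).det *
        ((1 / (d : ℝ)) * ((F K)ᵀ * (1 + αh⁻¹ • H K) * F K).trace) ^ q
      ≤ ((2 : ℝ) ^ (max 1 ((d : ℝ) * q / ((d : ℝ) + 2 * q)))
          * (∑ K ∈ Th, (F K).det)) ^ (((d : ℝ) + 2 * q) / d)
        * αh ^ q * (Th.card : ℝ) ^ (-(2 * q) / (d : ℝ)) := by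
  have hd' : (0 : ℝ) < d := by exact_mod_cast hd
  have hq0 : (0 : ℝ) < q := lt_of_lt_of_le one_pos hq
  set e : ℝ := (d : ℝ) + 2 * q with he_def
  have he : (0 : ℝ) < e := by positivity
  -- each summand equals (σh / N) ^ (e / d)
  have key : ∀ K ∈ Th, (F K).det *
      ((1 / (d : ℝ)) * ((F K)ᵀ * (1 + αh⁻¹ • H K) * F K).trace) ^ q
      = (σh / Th.card) ^ (e / d) := by
    intro K hK
    set A : Matrix (Fin d) (Fin d) ℝ := 1 + αh⁻¹ • H K with hA_def
    have hApd : A.PosDef :=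
      Matrix.PosDef.add_posSemidef Matrix.PosDef.one
        (psd_smul' (by positivity) (hH K hK))
    set x : ℝ := (F K).det with hx_def
    have hx : 0 < x := hF K hK
    set y : ℝ := A.det with hy_def
    have hy : 0 < y := hApd.det_pos
    set c : ℝ := y ^ (-(1 : ℝ) / e) with hc_def
    have hc : 0 < c := Real.rpow_pos_of_pos hy _
    have hMK : M K = c • A := hM K hK
    have hcard : Fintype.card (Fin d) = d := Fintype.card_fin d
    have hcd : (c : ℝ) ^ (d : ℕ) = y ^ (-(d : ℝ) / e) := by
      rw [hc_def, ← Real.rpow_natCast (y ^ (-(1:ℝ)/e)) d, ← Real.rpow_mul hy.le]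
      ring_nf
    have hdetM : (M K).det = y ^ (2 * q / e) := by
      rw [hMK, det_smul, hcard, hcd, ← hy_def]
      nth_rewrite 2 [← Real.rpow_one y]
      rw [← Real.rpow_add hy]
      congr 1
      field_simp
      ring
    have hsqrt : Real.sqrt (M K).det = y ^ (q / e) := by
      rw [hdetM, Real.sqrt_eq_rpow, ← Real.rpow_mul hy.le]
      congr 1
      field_simp
    have hequiK : x * y ^ (q / e) = σh / Th.card := by
      rw [← hsqrt]; exact hequi K hK
    have htr : ((F K)ᵀ * M K * F K).trace = c * ((F K)ᵀ * A * F K).trace := by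
      rw [hMK, Matrix.mul_smul, Matrix.smul_mul, trace_smul, smul_eq_mul]
    have hdetFMF : ((F K)ᵀ * M K * F K).det = c ^ (d : ℕ) * (x ^ 2 * y) := by
      rw [hMK, Matrix.mul_smul, Matrix.smul_mul, det_smul, hcard,
        det_mul, det_mul, det_transpose]
      ring
    have halignK : (1 / (d : ℝ)) * ((F K)ᵀ * A * F K).trace
        = (x ^ 2 * y) ^ ((1 : ℝ) / d) := by
      have h := halign K hK
      rw [htr, hdetFMF] at h
      have hpow : (c ^ (d : ℕ) * (x ^ 2 * y)) ^ ((1 : ℝ) / d)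
          = c * (x ^ 2 * y) ^ ((1 : ℝ) / d) := by
        rw [Real.mul_rpow (by positivity) (by positivity),
          ← Real.rpow_natCast c d, ← Real.rpow_mul hc.le,
          mul_one_div, div_self hd'.ne', Real.rpow_one]
      rw [hpow] at h
      have h' : c * ((1 / (d : ℝ)) * ((F K)ᵀ * A * F K).trace)
          = c * ((x ^ 2 * y) ^ ((1 : ℝ) / d)) := by
        rw [← h]; ring
      exact mul_left_cancel₀ hc.ne' h'
    rw [halignK, ← hequiK]
    have hL : x * ((x ^ 2 * y) ^ ((1 : ℝ)/d)) ^ q = x ^ (e/(d:ℝ)) * y ^ (q/(d:ℝ)) := by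
      rw [← Real.rpow_mul (by positivity),
        Real.mul_rpow (by positivity) hy.le,
        ← Real.rpow_natCast x 2, ← Real.rpow_mul hx.le, ← mul_assoc]
      nth_rewrite 1 [← Real.rpow_one x]
      rw [← Real.rpow_add hx]
      congr 1
      · rw [he_def]; field_simp; push_cast; ring_nf
      · congr 1; ring
    have hR : (x * y ^ (q/e)) ^ (e/(d:ℝ)) = x ^ (e/(d:ℝ)) * y ^ (q/(d:ℝ)) := by
      rw [Real.mul_rpow hx.le (by positivity), ← Real.rpow_mul hy.le]
      congr 2
      field_simp
    rw [hL, hR]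
  rw [Finset.sum_congr rfl key, Finset.sum_const, nsmul_eq_mul, ← hσval]
  rcases Th.eq_empty_or_nonempty with hTe | hTn
  · subst hTe
    have hσ0 : σh = 0 := by simpa using hσ
    simp only [Finset.card_empty, Nat.cast_zero, hσ0]
    rw [Real.zero_rpow (ne_of_gt (div_pos he hd')),
      Real.zero_rpow (ne_of_lt (div_neg_of_neg_of_pos (by linarith) hd'))]
    simp
  · have hN : (0 : ℝ) < Th.card := by
      exact_mod_cast Finset.card_pos.mpr hTn
    have hσ0 : 0 ≤ σh := by
      rw [hσ]
      exact Finset.sum_nonneg fun K hK =>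
        mul_nonneg (hF K hK).le (Real.sqrt_nonneg _)
    have hexp : -(2 * q) / (d : ℝ) = 1 - e / d := by
      rw [he_def]; field_simp; ring
    rw [Real.div_rpow hσ0 (Nat.cast_nonneg _), hexp,
      Real.rpow_sub hN, Real.rpow_one]
    have hNd : (0 : ℝ) < (Th.card : ℝ) ^ (e / (d : ℝ)) :=
      Real.rpow_pos_of_pos hN _
    apply le_of_eq
    field_simp
end
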